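/- arXiv:2207.06083 — 6 statements merged into one kernel-verified Lean document; each statement's English description precedes it below -/
import Mathlib

section
/- For all 0 ≤ i ≤ j ≤ n, the value Tree[i,j] defined by the dynamic-programming recurrence equals the minimum of Cost(T) over all binary search trees T on the keys k_{i+1},…,k_j with dummy keys d_i,…,d_j. In particular, Tree[0,n] is the minimum overall cost of searching over all binary search trees on the n keys k_1,…,k_n with dummy keys d_0,…,d_n. -/
/-- Binary trees whose leaves carry dummy keys `d_i` (stored as `i`) and whose
internal nodes carry keys `k_{r+1}` (stored as `r`). -/
inductive BST : Type
  | leaf (i : ℕ) : BST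
  | node (r : ℕ) (L R : BST) : BST

/-- `IsBST t i j` : `t` is a binary search tree on the keys `k_{i+1}, …, k_j`
with dummy keys `d_i, …, d_j` : `T(i,i)` consists of the single leaf `d_i`, and
for `i < j` a tree in `T(i,j)` has a root carrying key `k_{r+1}` for some
`i ≤ r < j`, a left subtree in `T(i,r)` and a right subtree in `T(r+1,j)`. -/
inductive IsBST : BST → ℕ → ℕ → Prop
  | leaf (i : ℕ) : IsBST (.leaf i) i i
  | node {i r j : ℕ} {L R : BST} (h1 : i ≤ r) (h2 : r < j)
      (hL : IsBST L i r) (hR : IsBST R (r + 1) j) :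
      IsBST (.node r L R) i j

/-- `cost P Q t d` : total search cost of the tree `t` whose root is at depth `d`,
i.e. `Σ depth(k_t)·p_t + Σ depth(d_t)·q_t`: a node at depth `e` carrying the key
`k_{r+1}` contributes `e * P (r+1)`, and a leaf at depth `e` carrying the dummy
key `d_i` contributes `e * Q i`.  The cost of the whole tree is `cost P Q t 1`
(the root has depth 1). -/
noncomputable def cost (P Q : ℕ → ℝ) : BST → ℕ → ℝ
  | .leaf i, d => d * Q i
  | .node r L R, d => d * P (r + 1) + cost P Q L (d + 1) + cost P Q R (d + 1)

/-!
Hanging two subtrees from `T(i,r)` and `T(r+1,j)` below a root `k_{r+1}` pushes each of their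
nodes one level deeper, which adds their total weight; with the root this adds exactly `w(i,j)`.
So a tree in `T(i,j)` with root `k_{r+1}` costs its two subtrees plus `w(i,j)`, and since the
subtrees can be chosen independently, minimising over them and then over `r` gives the
recurrence; induction on `j - i` finishes.
-/

noncomputable def weight (P Q : ℕ → ℝ) (i j : ℕ) : ℝ :=
  (∑ t ∈ Finset.Icc (i + 1) j, P t) + ∑ t ∈ Finset.Icc i j, Q t

def bstCosts (P Q : ℕ → ℝ) (i j : ℕ) : Set ℝ :=
  { c | ∃ t : BST, IsBST t i j ∧ cost P Q t 1 = c }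

section

variable (P Q : ℕ → ℝ)

lemma weight_self (i : ℕ) : weight P Q i i = Q i := by
  simp [weight]

lemma weight_eq_add_weight_add_weight {i r j : ℕ} (hir : i ≤ r) (hrj : r < j) :
    weight P Q i j = P (r + 1) + weight P Q i r + weight P Q (r + 1) j := by
  have hP : ∑ t ∈ Finset.Ico (i + 1) (j + 1), P t
      = ∑ t ∈ Finset.Ico (i + 1) (r + 1), P t
        + (P (r + 1) + ∑ t ∈ Finset.Ico (r + 1 + 1) (j + 1), P t) := by
    rw [← Finset.sum_eq_sum_Ico_succ_bot (by omega),
      Finset.sum_Ico_consecutive _ (by omega) (by omega)]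
  have hQ : ∑ t ∈ Finset.Ico i (j + 1), Q t
      = ∑ t ∈ Finset.Ico i (r + 1), Q t + ∑ t ∈ Finset.Ico (r + 1) (j + 1), Q t :=
    (Finset.sum_Ico_consecutive _ (by omega) (by omega)).symm
  simp only [weight, ← Finset.Ico_add_one_right_eq_Icc]
  rw [hP, hQ]
  ring

lemma IsBST.cost_succ {t : BST} {i j : ℕ} (h : IsBST t i j) (d : ℕ) :
    cost P Q t (d + 1) = cost P Q t d + weight P Q i j := by
  induction h generalizing d with
  | leaf i =>
    simp only [cost, weight_self]
    push_cast
    ring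
  | node hir hrj _ _ ihL ihR =>
    simp only [cost, ihL, ihR, weight_eq_add_weight_add_weight P Q hir hrj]
    push_cast
    ring

lemma cost_node {i r j : ℕ} {L R : BST} (hir : i ≤ r) (hrj : r < j)
    (hL : IsBST L i r) (hR : IsBST R (r + 1) j) :
    cost P Q (.node r L R) 1 = cost P Q L 1 + cost P Q R 1 + weight P Q i j := by
  simp only [cost, hL.cost_succ, hR.cost_succ, weight_eq_add_weight_add_weight P Q hir hrj]
  push_cast
  ring

lemma isLeast_bstCosts_self (i : ℕ) : IsLeast (bstCosts P Q i i) (Q i) := by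
  refine ⟨⟨.leaf i, .leaf i, by simp [cost]⟩, ?_⟩
  rintro c ⟨t, ht, rfl⟩
  cases ht with
  | leaf => simp [cost]
  | node hir hrj => omega

lemma isLeast_bstCosts_of_lt (T : ℕ → ℕ → ℝ) {i j : ℕ} (hij : i < j)
    (hsub : ∀ k ∈ Finset.Ico i j,
      IsLeast (bstCosts P Q i k) (T i k) ∧ IsLeast (bstCosts P Q (k + 1) j) (T (k + 1) j)) :
    IsLeast (bstCosts P Q i j) ((Finset.Ico i j).inf' (Finset.nonempty_Ico.mpr hij)
      (fun k => T i k + T (k + 1) j + weight P Q i j)) := by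
  constructor
  · obtain ⟨k, hk, hmin⟩ := Finset.exists_mem_eq_inf' (Finset.nonempty_Ico.mpr hij)
      (fun k => T i k + T (k + 1) j + weight P Q i j)
    obtain ⟨hik, hkj⟩ := Finset.mem_Ico.mp hk
    obtain ⟨⟨L, hL, hLcost⟩, -⟩ := (hsub k hk).1
    obtain ⟨⟨R, hR, hRcost⟩, -⟩ := (hsub k hk).2
    refine ⟨.node k L R, .node hik hkj hL hR, ?_⟩
    rw [hmin, cost_node P Q hik hkj hL hR, hLcost, hRcost]
  · rintro c ⟨t, ht, rfl⟩
    cases ht with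
    | leaf => omega
    | @node _ r _ L R hir hrj hL hR =>
      have hr : r ∈ Finset.Ico i j := Finset.mem_Ico.mpr ⟨hir, hrj⟩
      calc (Finset.Ico i j).inf' _ (fun k => T i k + T (k + 1) j + weight P Q i j)
          ≤ T i r + T (r + 1) j + weight P Q i j := Finset.inf'_le _ hr
        _ ≤ cost P Q L 1 + cost P Q R 1 + weight P Q i j := by
          gcongr
          exacts [(hsub r hr).1.2 ⟨L, hL, rfl⟩, (hsub r hr).2.2 ⟨R, hR, rfl⟩]
        _ = cost P Q (.node r L R) 1 := (cost_node P Q hir hrj hL hR).symm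

end

theorem stmt0_general (n : ℕ) (P Q : ℕ → ℝ)
    (w : ℕ → ℕ → ℝ)
    (hw : ∀ i j, i ≤ j → j ≤ n →
      w i j = (∑ t ∈ Finset.Icc (i + 1) j, P t) + ∑ t ∈ Finset.Icc i j, Q t)
    (Tree : ℕ → ℕ → ℝ)
    (hTree0 : ∀ i, i ≤ n → Tree i i = Q i)
    (hTree : ∀ i j (hij : i < j), j ≤ n →
      Tree i j = (Finset.Ico i j).inf' (Finset.nonempty_Ico.mpr hij)
        (fun k => Tree i k + Tree (k + 1) j + w i j)) :
    ∀ i j, i ≤ j → j ≤ n →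
      IsLeast { c : ℝ | ∃ t : BST, IsBST t i j ∧ cost P Q t 1 = c } (Tree i j) := by
  intro i j hij hjn
  change IsLeast (bstCosts P Q i j) (Tree i j)
  induction hgap : j - i using Nat.strong_induction_on generalizing i j with
  | _ m ih =>
    rcases hij.eq_or_lt with rfl | hlt
    · rw [hTree0 i hjn]
      exact isLeast_bstCosts_self P Q i
    · have hwij : w i j = weight P Q i j := hw i j hij hjn
      rw [hTree i j hlt hjn, hwij]
      refine isLeast_bstCosts_of_lt P Q Tree hlt fun k hk => ?_
      obtain ⟨hik, hkj⟩ := Finset.mem_Ico.mp hk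
      exact ⟨ih (k - i) (by omega) i k hik (by omega) rfl,
        ih (j - (k + 1)) (by omega) (k + 1) j hkj hjn rfl⟩

/-- For all `0 ≤ i ≤ j ≤ n`, the dynamic-programming value `Tree[i,j]` is the
minimum of `Cost(T)` over all binary search trees `T` on the keys
`k_{i+1}, …, k_j` with dummy keys `d_i, …, d_j`. -/
theorem stmt0 (n : ℕ) (hn : 1 ≤ n) (P Q : ℕ → ℝ)
    (hP : ∀ t, 1 ≤ t → t ≤ n → 0 ≤ P t) (hQ : ∀ t, t ≤ n → 0 ≤ Q t)
    (w : ℕ → ℕ → ℝ)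
    (hw : ∀ i j, i ≤ j → j ≤ n →
      w i j = (∑ t ∈ Finset.Icc (i + 1) j, P t) + ∑ t ∈ Finset.Icc i j, Q t)
    (Tree : ℕ → ℕ → ℝ)
    (hTree0 : ∀ i, i ≤ n → Tree i i = Q i)
    (hTree : ∀ i j (hij : i < j), j ≤ n →
      Tree i j = (Finset.Ico i j).inf' (Finset.nonempty_Ico.mpr hij)
        (fun k => Tree i k + Tree (k + 1) j + w i j)) :
    ∀ i j, i ≤ j → j ≤ n →
      IsLeast { c : ℝ | ∃ t : BST, IsBST t i j ∧ cost P Q t 1 = c } (Tree i j) :=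
  stmt0_general n P Q w hw Tree hTree0 hTree
end

section
/- The dynamic-programming table Tree satisfies the quadrangle inequality: for all 0 ≤ i ≤ i' ≤ j ≤ j' ≤ n, Tree[i,j] + Tree[i',j'] ≤ Tree[i',j] + Tree[i,j']. -/
/-! Yao's argument, by induction on `j' - i`. Take optimal split points `k₁` of `[i', j]` and
`k₂` of `[i, j']`. If `k₂ ≤ k₁`, split `[i, j]` at `k₂` and `[i', j']` at `k₁`, otherwise the
other way round: one pair of parts is then exactly the pair in the optimal decompositions, the
other pair is handled by a narrower instance of the inequality, and the weights contribute
`w i j + w i' j' ≤ w i' j + w i j'`. When `i' = j` only `[i, j']` is split, and one uses instead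
that `w` grows with the interval. Interval sums satisfy the quadrangle inequality with equality,
and they grow with the interval because the weights are nonnegative. -/

open Finset

def QuadrangleIneq (n : ℕ) (f : ℕ → ℕ → ℝ) : Prop :=
  ∀ i i' j j', i ≤ i' → i' ≤ j → j ≤ j' → j' ≤ n → f i j + f i' j' ≤ f i' j + f i j'

def IntervalMonotone (n : ℕ) (f : ℕ → ℕ → ℝ) : Prop :=
  ∀ i i' j j', i ≤ i' → i' ≤ j → j ≤ j' → j' ≤ n → f i' j ≤ f i j'

def SplitRecurrence (n : ℕ) (w T : ℕ → ℕ → ℝ) : Prop :=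
  ∀ i j (hij : i < j), j ≤ n →
    T i j = (Ico i j).inf' (nonempty_Ico.mpr hij) (fun k => T i k + T (k + 1) j + w i j)

theorem Finset.sum_Icc_add_sum_Icc {M : Type*} [AddCommMonoid M] (f : ℕ → M) {a a' b b' : ℕ}
    (ha : a ≤ a') (ha' : a' ≤ b + 1) (hb : b ≤ b') :
    ∑ t ∈ Icc a b, f t + ∑ t ∈ Icc a' b', f t = ∑ t ∈ Icc a' b, f t + ∑ t ∈ Icc a b', f t := by
  simp only [← Ico_add_one_right_eq_Icc]
  rw [← sum_Ico_consecutive f ha ha', ← sum_Ico_consecutive f ha (by omega : a' ≤ b' + 1)]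
  abel

namespace SplitRecurrence

variable {n : ℕ} {w T : ℕ → ℕ → ℝ}

theorem le_add (hT : SplitRecurrence n w T) {i j k : ℕ} (hik : i ≤ k) (hkj : k < j)
    (hj : j ≤ n) : T i j ≤ T i k + T (k + 1) j + w i j := by
  rw [hT i j (hik.trans_lt hkj) hj]
  exact inf'_le _ (mem_Ico.mpr ⟨hik, hkj⟩)

theorem exists_eq_add (hT : SplitRecurrence n w T) {i j : ℕ} (hij : i < j) (hj : j ≤ n) :
    ∃ k, i ≤ k ∧ k < j ∧ T i j = T i k + T (k + 1) j + w i j := by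
  obtain ⟨k, hk, hk_eq⟩ := exists_mem_eq_inf' (nonempty_Ico.mpr hij)
    (fun k => T i k + T (k + 1) j + w i j)
  rw [mem_Ico] at hk
  exact ⟨k, hk.1, hk.2, by rw [hT i j hij hj, hk_eq]⟩

variable {i i' j j' : ℕ}

theorem quadrangleIneq_of_eq (hT : SplitRecurrence n w T) (hwm : IntervalMonotone n w)
    (hii' : i < i') (hi'j' : i' < j') (hj' : j' ≤ n)
    (ih : ∀ a a' b b', b' - a < j' - i → a ≤ a' → a' ≤ b → b ≤ b' → b' ≤ n →
      T a b + T a' b' ≤ T a' b + T a b') :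
    T i i' + T i' j' ≤ T i' i' + T i j' := by
  obtain ⟨k, hik, hkj', hk⟩ := hT.exists_eq_add (hii'.trans hi'j') hj'
  rcases lt_or_ge k i' with hki' | hi'k
  · have h₁ := hT.le_add hik hki' (by omega)
    have h₂ := ih (k + 1) i' i' j' (by omega) (by omega) le_rfl hi'j'.le hj'
    have h₃ := hwm i i i' j' le_rfl hii'.le hi'j'.le hj'
    linarith
  · have h₁ := hT.le_add hi'k hkj' hj'
    have h₂ := ih i i' i' k (by omega) hii'.le le_rfl hi'k (by omega)
    have h₃ := hwm i i' j' j' hii'.le hi'j'.le le_rfl hj'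
    linarith

theorem quadrangleIneq_of_lt (hT : SplitRecurrence n w T) (hwq : QuadrangleIneq n w)
    (hii' : i < i') (hi'j : i' < j) (hjj' : j < j') (hj' : j' ≤ n)
    (ih : ∀ a a' b b', b' - a < j' - i → a ≤ a' → a' ≤ b → b ≤ b' → b' ≤ n →
      T a b + T a' b' ≤ T a' b + T a b') :
    T i j + T i' j' ≤ T i' j + T i j' := by
  obtain ⟨k₁, hi'k₁, hk₁j, hk₁⟩ := hT.exists_eq_add hi'j (by omega)
  obtain ⟨k₂, hik₂, hk₂j', hk₂⟩ := hT.exists_eq_add (by omega : i < j') hj'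
  have hw := hwq i i' j j' hii'.le hi'j.le hjj'.le hj'
  rcases le_or_gt k₂ k₁ with hk | hk
  · have h₁ := hT.le_add hik₂ (by omega : k₂ < j) (by omega)
    have h₂ := hT.le_add hi'k₁ (by omega : k₁ < j') hj'
    have h₃ := ih (k₂ + 1) (k₁ + 1) j j' (by omega) (by omega) (by omega) hjj'.le hj'
    linarith
  · have h₁ := hT.le_add (by omega : i ≤ k₁) hk₁j (by omega)
    have h₂ := hT.le_add (by omega : i' ≤ k₂) hk₂j' hj'
    have h₃ := ih i i' k₁ k₂ (by omega) hii'.le hi'k₁ hk.le (by omega)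
    linarith

theorem quadrangleIneq (hT : SplitRecurrence n w T) (hwq : QuadrangleIneq n w)
    (hwm : IntervalMonotone n w) : QuadrangleIneq n T := by
  intro i i' j j'
  induction hd : j' - i using Nat.strong_induction_on generalizing i i' j j' with
  | _ d ih =>
    intro hii' hi'j hjj' hj'
    subst hd
    replace ih := fun a a' b b' (h : b' - a < j' - i) => ih _ h a a' b b' rfl
    rcases hii'.eq_or_lt with rfl | hii'
    · exact le_rfl
    rcases hjj'.eq_or_lt with rfl | hjj'
    · exact (add_comm _ _).le
    rcases hi'j.eq_or_lt with rfl | hi'j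
    · exact hT.quadrangleIneq_of_eq hwm hii' hjj' hj' ih
    · exact hT.quadrangleIneq_of_lt hwq hii' hi'j hjj' hj' ih

end SplitRecurrence

section IntervalWeight

variable {n : ℕ} {P Q : ℕ → ℝ} {w : ℕ → ℕ → ℝ}

theorem quadrangleIneq_of_eq_sum_Icc
    (hw : ∀ i j, i ≤ j → j ≤ n →
      w i j = (∑ t ∈ Icc (i + 1) j, P t) + ∑ t ∈ Icc i j, Q t) :
    QuadrangleIneq n w := by
  intro i i' j j' hii' hi'j hjj' hj'
  rw [hw i j (hii'.trans hi'j) (hjj'.trans hj'), hw i' j' (hi'j.trans hjj') hj',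
    hw i' j hi'j (hjj'.trans hj'), hw i j' (hii'.trans (hi'j.trans hjj')) hj']
  have hP := sum_Icc_add_sum_Icc P (by omega : i + 1 ≤ i' + 1) (by omega) hjj'
  have hQ := sum_Icc_add_sum_Icc Q hii' (by omega) hjj'
  linarith

theorem intervalMonotone_of_eq_sum_Icc (hP : ∀ t, 1 ≤ t → t ≤ n → 0 ≤ P t)
    (hQ : ∀ t, t ≤ n → 0 ≤ Q t)
    (hw : ∀ i j, i ≤ j → j ≤ n →
      w i j = (∑ t ∈ Icc (i + 1) j, P t) + ∑ t ∈ Icc i j, Q t) :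
    IntervalMonotone n w := by
  intro i i' j j' hii' hi'j hjj' hj'
  rw [hw i' j hi'j (hjj'.trans hj'), hw i j' (hii'.trans (hi'j.trans hjj')) hj']
  refine add_le_add ?_ ?_
  · refine sum_le_sum_of_subset_of_nonneg (Icc_subset_Icc (by omega) hjj') fun t ht _ => ?_
    rw [mem_Icc] at ht
    exact hP t (by omega) (by omega)
  · refine sum_le_sum_of_subset_of_nonneg (Icc_subset_Icc hii' hjj') fun t ht _ => ?_
    exact hQ t ((mem_Icc.mp ht).2.trans hj')

end IntervalWeight

theorem stmt3_general (n : ℕ) (P Q : ℕ → ℝ)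
    (hP : ∀ t, 1 ≤ t → t ≤ n → 0 ≤ P t) (hQ : ∀ t, t ≤ n → 0 ≤ Q t)
    (w : ℕ → ℕ → ℝ)
    (hw : ∀ i j, i ≤ j → j ≤ n →
      w i j = (∑ t ∈ Finset.Icc (i + 1) j, P t) + ∑ t ∈ Finset.Icc i j, Q t)
    (Tree : ℕ → ℕ → ℝ)
    (hTree : ∀ i j (hij : i < j), j ≤ n →
      Tree i j = (Finset.Ico i j).inf' (Finset.nonempty_Ico.mpr hij)
        (fun k => Tree i k + Tree (k + 1) j + w i j)) :
    ∀ i i' j j', i ≤ i' → i' ≤ j → j ≤ j' → j' ≤ n →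
      Tree i j + Tree i' j' ≤ Tree i' j + Tree i j' :=
  SplitRecurrence.quadrangleIneq hTree (quadrangleIneq_of_eq_sum_Icc hw)
    (intervalMonotone_of_eq_sum_Icc hP hQ hw)

/-- The dynamic-programming table `Tree` satisfies the quadrangle inequality:
for all `0 ≤ i ≤ i' ≤ j ≤ j' ≤ n`,
`Tree[i,j] + Tree[i',j'] ≤ Tree[i',j] + Tree[i,j']`. -/
theorem stmt3 (n : ℕ) (hn : 1 ≤ n) (P Q : ℕ → ℝ)
    (hP : ∀ t, 1 ≤ t → t ≤ n → 0 ≤ P t) (hQ : ∀ t, t ≤ n → 0 ≤ Q t)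
    (w : ℕ → ℕ → ℝ)
    (hw : ∀ i j, i ≤ j → j ≤ n →
      w i j = (∑ t ∈ Finset.Icc (i + 1) j, P t) + ∑ t ∈ Finset.Icc i j, Q t)
    (Tree : ℕ → ℕ → ℝ)
    (hTree0 : ∀ i, i ≤ n → Tree i i = Q i)
    (hTree : ∀ i j (hij : i < j), j ≤ n →
      Tree i j = (Finset.Ico i j).inf' (Finset.nonempty_Ico.mpr hij)
        (fun k => Tree i k + Tree (k + 1) j + w i j)) :
    ∀ i i' j j', i ≤ i' → i' ≤ j → j ≤ j' → j' ≤ n →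
      Tree i j + Tree i' j' ≤ Tree i' j + Tree i j' :=
  stmt3_general n P Q hP hQ w hw Tree hTree
end

section
/- The amortized work bound underlying Knuth's O(n²) algorithm: let Cut be any integer table with Cut[i,i] = i, i ≤ Cut[i,j] < j for 0 ≤ i < j ≤ n, satisfying the monotonicity Cut[i,j-1] ≤ Cut[i,j] ≤ Cut[i+1,j] for all 0 ≤ i < j ≤ n. Then for every diagonal index d with 2 ≤ d ≤ n, Σ_{i=0}^{n-d} ( Cut[i+1,i+d] − Cut[i,i+d-1] + 1 ) ≤ 2n. -/
/-!
Along the diagonal `d`, the `i`-th term is `f (i + 1) - f i + 1` for `f i = Cut i (i + d - 1)`,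
so the sum telescopes to `Cut (n - d + 1) n - Cut 0 (d - 1) + (n - d + 1)`. The range condition
bounds the two surviving cuts by `n - 1` and `0`, leaving at most `2n - d < 2n`.
-/

open Finset

theorem sum_range_sub_add_one {M : Type*} [AddCommGroupWithOne M] (f : ℕ → M) (m : ℕ) :
    ∑ i ∈ range m, (f (i + 1) - f i + 1) = f m - f 0 + (m : M) := by
  rw [sum_add_distrib, sum_range_sub, sum_const, card_range, nsmul_one]

theorem stmt6_general (n : ℕ) (Cut : ℕ → ℕ → ℤ)
    (hrange : ∀ i j, i < j → j ≤ n → (i : ℤ) ≤ Cut i j ∧ Cut i j < j) :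
    ∀ d, 2 ≤ d → d ≤ n →
      (∑ i ∈ Finset.range (n - d + 1),
        (Cut (i + 1) (i + d) - Cut i (i + d - 1) + 1)) ≤ 2 * (n : ℤ) := by
  intro d hd2 hdn
  have hshift : ∀ i, i + 1 + d - 1 = i + d := fun i => by omega
  have hsum := sum_range_sub_add_one (fun i => Cut i (i + d - 1)) (n - d + 1)
  simp only [hshift, Nat.sub_add_cancel hdn, zero_add] at hsum
  have hlast : Cut (n - d + 1) n < n := by
    simpa using (hrange (n - d + 1) n (by omega) le_rfl).2
  have hfirst : 0 ≤ Cut 0 (d - 1) := by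
    simpa using (hrange 0 (d - 1) (by omega) (by omega)).1
  rw [hsum]
  push_cast [hdn]
  omega

/-- The amortized work bound underlying Knuth's `O(n²)` algorithm: if `Cut` is
any integer table with `Cut[i,i] = i`, `i ≤ Cut[i,j] < j` for `0 ≤ i < j ≤ n`,
satisfying the monotonicity `Cut[i,j-1] ≤ Cut[i,j] ≤ Cut[i+1,j]` for all
`0 ≤ i < j ≤ n`, then for every diagonal index `d` with `2 ≤ d ≤ n`,
`Σ_{i=0}^{n-d} ( Cut[i+1,i+d] − Cut[i,i+d-1] + 1 ) ≤ 2n`. -/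
theorem stmt6 (n : ℕ) (hn : 2 ≤ n) (Cut : ℕ → ℕ → ℤ)
    (hdiag : ∀ i, i ≤ n → Cut i i = i)
    (hrange : ∀ i j, i < j → j ≤ n → (i : ℤ) ≤ Cut i j ∧ Cut i j < j)
    (hmono : ∀ i j, i < j → j ≤ n →
      Cut i (j - 1) ≤ Cut i j ∧ Cut i j ≤ Cut (i + 1) j) :
    ∀ d, 2 ≤ d → d ≤ n →
      (∑ i ∈ Finset.range (n - d + 1),
        (Cut (i + 1) (i + d) - Cut i (i + d - 1) + 1)) ≤ 2 * (n : ℤ) :=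
  stmt6_general n Cut hrange
end

section
/- In the dynamic graph D_n, the shortest-path value from the source to any vertex equals the corresponding dynamic-programming value: for all 0 ≤ i ≤ j ≤ n, SP(i,j) = Tree[i,j], where SP(i,j) is the minimum total weight over all directed paths in D_n from (−1,−1) to (i,j). -/
/-- The weighted edges of the dynamic graph `D_n`.  Vertices live in `ℤ × ℤ`
(the source is `(-1,-1)`; all other vertices `(i,j)` have `0 ≤ i ≤ j ≤ n`).
`Edge n Q w T u v c` means there is an edge from `u` to `v` of weight `c`. -/
inductive Edge (n : ℕ) (Q : ℕ → ℝ) (w T : ℕ → ℕ → ℝ) : ℤ × ℤ → ℤ × ℤ → ℝ → Prop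
  | init (i : ℕ) (h : i ≤ n) :
      Edge n Q w T (-1, -1) ((i : ℤ), (i : ℤ)) (Q i)
  | horiz (i j : ℕ) (h1 : i ≤ j) (h2 : j < n) :
      Edge n Q w T ((i : ℤ), (j : ℤ)) ((i : ℤ), ((j + 1 : ℕ) : ℤ))
        (Q (j + 1) + w i (j + 1))
  | vert (i j : ℕ) (h0 : 0 < i) (h1 : i ≤ j) (h2 : j ≤ n) :
      Edge n Q w T ((i : ℤ), (j : ℤ)) (((i - 1 : ℕ) : ℤ), (j : ℤ))
        (Q (i - 1) + w (i - 1) j)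
  | hjump (i k j : ℕ) (h1 : i < k) (h2 : k < j) (h3 : j ≤ n) :
      Edge n Q w T ((i : ℤ), (k : ℤ)) ((i : ℤ), (j : ℤ)) (T (k + 1) j + w i j)
  | vjump (i k j : ℕ) (h1 : i ≤ k) (h2 : k + 1 < j) (h3 : j ≤ n) :
      Edge n Q w T (((k + 1 : ℕ) : ℤ), (j : ℤ)) ((i : ℤ), (j : ℤ)) (T i k + w i j)

/-- `Walk E u v c` : there is a directed path (a finite sequence of consecutive
edges) from `u` to `v` of total weight `c` in the graph whose weighted edge
relation is `E`. -/
inductive Walk {α : Type*} (E : α → α → ℝ → Prop) : α → α → ℝ → Prop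
  | nil (a : α) : Walk E a a 0
  | cons {a b d : α} {c c' : ℝ} (h : E a b c) (hw : Walk E b d c') :
      Walk E a d (c + c')

/-!
The upper bound is a path: if `k` attains the minimum defining `Tree[i,j]`, extend an optimal
path to `(i,k)` by the horizontal jump to `(i,j)`, or, when `k = i`, an optimal path to
`(i+1,j)` by the vertical unit edge. For the lower bound, `(i,j) ↦ Tree[i,j]` (with `0` at the
source) is a potential: every edge `u → v` of weight `c` satisfies `Tree v ≤ Tree u + c`, since
each edge weight is one of the candidates in the minimum defining `Tree v`, and summing along
a path bounds its weight from below by `Tree[i,j]`.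
-/

namespace Walk

variable {α : Type*} {E : α → α → ℝ → Prop}

lemma snoc {a b d : α} {c c' : ℝ} (hw : Walk E a b c) (h : E b d c') :
    Walk E a d (c + c') := by
  induction hw with
  | nil => simpa using Walk.cons h (Walk.nil _)
  | cons h' _ ih => rw [add_assoc]; exact Walk.cons h' (ih h)

lemma le_add_of_potential (φ : α → ℝ) (hE : ∀ u v c, E u v c → φ v ≤ φ u + c)
    {u v : α} {c : ℝ} (hw : Walk E u v c) : φ v ≤ φ u + c := by
  induction hw with
  | nil => simp
  | cons h _ ih => linarith [hE _ _ _ h]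

end Walk

section DynamicGraph

variable {n : ℕ} {Q : ℕ → ℝ} {w Tree : ℕ → ℕ → ℝ}

def treePotential (Tree : ℕ → ℕ → ℝ) (u : ℤ × ℤ) : ℝ :=
  if u.1 = -1 then 0 else Tree u.1.toNat u.2.toNat

@[simp] lemma treePotential_source : treePotential Tree (-1, -1) = 0 := by
  simp [treePotential]

@[simp] lemma treePotential_natCast (i j : ℕ) :
    treePotential Tree ((i : ℤ), (j : ℤ)) = Tree i j := by
  simp [treePotential]

variable (hTree0 : ∀ i, i ≤ n → Tree i i = Q i)
  (hTree : ∀ i j (hij : i < j), j ≤ n →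
    Tree i j = (Finset.Ico i j).inf' (Finset.nonempty_Ico.mpr hij)
      (fun k => Tree i k + Tree (k + 1) j + w i j))
include hTree

lemma tree_le_split {i k j : ℕ} (hik : i ≤ k) (hkj : k < j) (hjn : j ≤ n) :
    Tree i j ≤ Tree i k + Tree (k + 1) j + w i j := by
  rw [hTree i j (by omega) hjn]
  exact Finset.inf'_le _ (Finset.mem_Ico.mpr ⟨hik, hkj⟩)

include hTree0

lemma Edge.treePotential_le {u v : ℤ × ℤ} {c : ℝ} (he : Edge n Q w Tree u v c) :
    treePotential Tree v ≤ treePotential Tree u + c := by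
  cases he with
  | init i h => simp [hTree0 i h]
  | horiz i j h1 h2 =>
    have := tree_le_split hTree h1 (Nat.lt_succ_self j) h2
    rw [hTree0 (j + 1) h2] at this
    simp only [treePotential_natCast]; linarith
  | vert i j h0 h1 h2 =>
    have := tree_le_split hTree le_rfl (show i - 1 < j by omega) h2
    rw [hTree0 (i - 1) (by omega), Nat.sub_add_cancel h0] at this
    simp only [treePotential_natCast]; linarith
  | hjump i k j h1 h2 h3 =>
    have := tree_le_split hTree h1.le h2 h3
    simp only [treePotential_natCast]; linarith
  | vjump i k j h1 h2 h3 =>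
    have := tree_le_split hTree h1 (show k < j by omega) h3
    simp only [treePotential_natCast]; linarith

lemma walk_source_tree (i j : ℕ) (hij : i ≤ j) (hjn : j ≤ n) :
    Walk (Edge n Q w Tree) (-1, -1) ((i : ℤ), (j : ℤ)) (Tree i j) := by
  rcases hij.eq_or_lt with rfl | hlt
  · simpa [hTree0 i hjn] using Walk.cons (Edge.init i hjn) (Walk.nil _)
  obtain ⟨k, hk, hkmin⟩ := Finset.exists_mem_eq_inf' (Finset.nonempty_Ico.mpr hlt)
    (fun k => Tree i k + Tree (k + 1) j + w i j)
  obtain ⟨hik, hkj⟩ := Finset.mem_Ico.mp hk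
  rw [hTree i j hlt hjn, hkmin]
  rcases hik.eq_or_lt with rfl | hik
  · have he : Edge n Q w Tree (((i + 1 : ℕ) : ℤ), (j : ℤ)) ((i : ℤ), (j : ℤ)) (Q i + w i j) := by
      simpa using Edge.vert (n := n) (Q := Q) (w := w) (T := Tree) (i + 1) j
        (Nat.succ_pos i) hlt hjn
    have hw := (walk_source_tree (i + 1) j hlt hjn).snoc he
    rw [hTree0 i (by omega)]
    convert hw using 1; ring
  · have hw := (walk_source_tree i k hik.le (by omega)).snoc (Edge.hjump i k j hik hkj hjn)
    convert hw using 1; ring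
termination_by j - i

end DynamicGraph

theorem stmt7_general (n : ℕ) (Q : ℕ → ℝ)
    (w : ℕ → ℕ → ℝ)
    (Tree : ℕ → ℕ → ℝ)
    (hTree0 : ∀ i, i ≤ n → Tree i i = Q i)
    (hTree : ∀ i j (hij : i < j), j ≤ n →
      Tree i j = (Finset.Ico i j).inf' (Finset.nonempty_Ico.mpr hij)
        (fun k => Tree i k + Tree (k + 1) j + w i j)) :
    ∀ i j, i ≤ j → j ≤ n →
      IsLeast { c : ℝ |
          Walk (Edge n Q w Tree) (-1, -1) ((i : ℤ), (j : ℤ)) c }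
        (Tree i j) := by
  intro i j hij hjn
  refine ⟨walk_source_tree hTree0 hTree i j hij hjn, fun c hc => ?_⟩
  simpa using hc.le_add_of_potential (treePotential Tree)
    fun _ _ _ he => Edge.treePotential_le hTree0 hTree he

/-- In the dynamic graph `D_n`, the shortest-path value from the source to any
vertex equals the corresponding dynamic-programming value: for all
`0 ≤ i ≤ j ≤ n`, `SP(i,j) = Tree[i,j]`, where `SP(i,j)` is the minimum total
weight over all directed paths in `D_n` from `(−1,−1)` to `(i,j)`. -/
theorem stmt7 (n : ℕ) (hn : 1 ≤ n) (P Q : ℕ → ℝ)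
    (hP : ∀ t, 1 ≤ t → t ≤ n → 0 ≤ P t) (hQ : ∀ t, t ≤ n → 0 ≤ Q t)
    (w : ℕ → ℕ → ℝ)
    (hw : ∀ i j, i ≤ j → j ≤ n →
      w i j = (∑ t ∈ Finset.Icc (i + 1) j, P t) + ∑ t ∈ Finset.Icc i j, Q t)
    (Tree : ℕ → ℕ → ℝ)
    (hTree0 : ∀ i, i ≤ n → Tree i i = Q i)
    (hTree : ∀ i j (hij : i < j), j ≤ n →
      Tree i j = (Finset.Ico i j).inf' (Finset.nonempty_Ico.mpr hij)
        (fun k => Tree i k + Tree (k + 1) j + w i j)) :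
    ∀ i j, i ≤ j → j ≤ n →
      IsLeast { c : ℝ |
          Walk (Edge n Q w Tree) (-1, -1) ((i : ℤ), (j : ℤ)) c }
        (Tree i j) :=
  stmt7_general n Q w Tree hTree0 hTree
end

section
/- Duality of shortest paths in the dynamic graph: for all 0 ≤ i < k < j ≤ n with k+1 < j, the minimum total weight over directed paths in D_n from (−1,−1) to (i,j) whose final edge is the horizontal jump (i,k)→(i,j) equals the minimum total weight over directed paths from (−1,−1) to (i,j) whose final edge is the vertical jump (k+1,j)→(i,j), and both minima equal Tree[i,k] + Tree[k+1,j] + w(i,j). Consequently, if a shortest path from (−1,−1) to (i,j) contains the horizontal jump (i,k)→(i,j) as its final edge, then there exists a shortest path (of the same minimal weight) containing the vertical jump (k+1,j)→(i,j) as its final edge, and vice versa. -/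
/-!
`Tree` is a potential on `D_n`: every edge weight is one of the terms minimised in the
recursion for `Tree` at the head of the edge, so along any edge `Tree` grows by at most the
edge weight, and every walk from `(-1,-1)` to `(i,j)` weighs at least `Tree[i,j]`.
Conversely, following an optimal split `k` of `[i,j]` backwards yields a walk of weight exactly
`Tree[i,j]`. Hence the shortest paths through the horizontal jump `(i,k)→(i,j)` and through the
vertical jump `(k+1,j)→(i,j)` both weigh `Tree[i,k] + Tree[k+1,j] + w(i,j)`.
-/

theorem Walk.concat {α : Type*} {E : α → α → ℝ → Prop} {a b d : α} {c c' : ℝ}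
    (h : Walk E a b c) (he : E b d c') : Walk E a d (c + c') := by
  induction h with
  | nil a => simpa using Walk.cons he (Walk.nil d)
  | cons h₁ _ ih => simpa only [add_assoc] using Walk.cons h₁ (ih he)

theorem Walk.potential_le {α : Type*} {E : α → α → ℝ → Prop} (φ : α → ℝ)
    (hE : ∀ a b c, E a b c → φ b ≤ φ a + c) {a b : α} {c : ℝ} (h : Walk E a b c) :
    φ b ≤ φ a + c := by
  induction h with
  | nil a => simp
  | cons he _ ih => linarith [hE _ _ _ he]

theorem IsLeast.mem_iff_mem {α : Type*} [PartialOrder α] {D H V : Set α} {c m : α}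
    (hc : IsLeast D c) (hH : IsLeast H m) (hV : IsLeast V m) (hm : m ∈ D) :
    c ∈ H ↔ c ∈ V := by
  have hcm : c ≤ m := hc.2 hm
  constructor
  · intro h
    exact le_antisymm hcm (hH.2 h) ▸ hV.1
  · intro h
    exact le_antisymm hcm (hV.2 h) ▸ hH.1

theorem isLeast_exists_add {p : ℝ → Prop} {m e v : ℝ} (h : IsLeast {c | p c} m)
    (hv : m + e = v) : IsLeast {c | ∃ c', p c' ∧ c = c' + e} v := by
  subst hv
  refine ⟨⟨m, h.1, rfl⟩, ?_⟩
  rintro _ ⟨c', hc', rfl⟩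
  exact add_le_add_left (h.2 hc') e

structure IsTreeTable (n : ℕ) (Q : ℕ → ℝ) (w Tree : ℕ → ℕ → ℝ) : Prop where
  diag : ∀ i, i ≤ n → Tree i i = Q i
  split : ∀ i j (hij : i < j), j ≤ n →
    Tree i j = (Finset.Ico i j).inf' (Finset.nonempty_Ico.mpr hij)
      (fun k => Tree i k + Tree (k + 1) j + w i j)

namespace IsTreeTable

variable {n : ℕ} {Q : ℕ → ℝ} {w Tree : ℕ → ℕ → ℝ}

theorem le_split (hT : IsTreeTable n Q w Tree) {i k j : ℕ} (hik : i ≤ k) (hkj : k < j)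
    (hjn : j ≤ n) : Tree i j ≤ Tree i k + Tree (k + 1) j + w i j := by
  rw [hT.split i j (hik.trans_lt hkj) hjn]
  exact Finset.inf'_le _ (Finset.mem_Ico.mpr ⟨hik, hkj⟩)

def potential (Tree : ℕ → ℕ → ℝ) (p : ℤ × ℤ) : ℝ :=
  if p.1 < 0 then 0 else Tree p.1.toNat p.2.toNat

@[simp]
theorem potential_source : potential Tree (-1, -1) = 0 := by
  simp [potential]

@[simp]
theorem potential_natCast (i j : ℕ) : potential Tree ((i : ℤ), (j : ℤ)) = Tree i j := by
  simp [potential]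

theorem potential_le_of_edge (hT : IsTreeTable n Q w Tree) {a b : ℤ × ℤ} {c : ℝ}
    (h : Edge n Q w Tree a b c) : potential Tree b ≤ potential Tree a + c := by
  cases h with
  | init i hi => simp [hT.diag i hi]
  | horiz i j hij hjn =>
    have := hT.le_split hij j.lt_succ_self hjn
    simp only [potential_natCast, hT.diag (j + 1) hjn] at this ⊢
    linarith
  | vert i j hi hij hjn =>
    have := hT.le_split (le_refl (i - 1)) (by omega) hjn
    simp only [potential_natCast, hT.diag (i - 1) (by omega), Nat.sub_add_cancel hi] at this ⊢
    linarith
  | hjump i k j hik hkj hjn =>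
    have := hT.le_split hik.le hkj hjn
    simp only [potential_natCast]
    linarith
  | vjump i k j hik hkj hjn =>
    have := hT.le_split hik (by omega) hjn
    simp only [potential_natCast]
    linarith

theorem le_of_walk (hT : IsTreeTable n Q w Tree) {i j : ℕ} {c : ℝ}
    (h : Walk (Edge n Q w Tree) (-1, -1) ((i : ℤ), (j : ℤ)) c) : Tree i j ≤ c := by
  simpa using h.potential_le (potential Tree) fun _ _ _ => hT.potential_le_of_edge

theorem walk_tree (hT : IsTreeTable n Q w Tree) (i j : ℕ) (hij : i ≤ j) (hjn : j ≤ n) :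
    Walk (Edge n Q w Tree) (-1, -1) ((i : ℤ), (j : ℤ)) (Tree i j) := by
  rcases hij.eq_or_lt with rfl | hlt
  · simpa [hT.diag i hjn] using Walk.cons (Edge.init i hjn) (Walk.nil ((i : ℤ), (i : ℤ)))
  obtain ⟨k, hk, hopt⟩ := Finset.exists_mem_eq_inf' (Finset.nonempty_Ico.mpr hlt)
    (fun k => Tree i k + Tree (k + 1) j + w i j)
  obtain ⟨hik, hkj⟩ := Finset.mem_Ico.mp hk
  rw [hT.split i j hlt hjn, hopt]
  rcases hik.eq_or_lt with rfl | hik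
  · -- the split `k = i` is the vertical unit edge `(i+1,j) → (i,j)`
    have hedge := Edge.vert (Q := Q) (w := w) (T := Tree) (i + 1) j (by omega) (by omega) hjn
    simp only [Nat.add_sub_cancel] at hedge
    convert (hT.walk_tree (i + 1) j (by omega) hjn).concat hedge using 1
    rw [hT.diag i (by omega)]
    ring
  · convert (hT.walk_tree i k hik.le (by omega)).concat (Edge.hjump i k j hik hkj hjn) using 1
    ring
termination_by j - i

theorem isLeast_walk (hT : IsTreeTable n Q w Tree) {i j : ℕ} (hij : i ≤ j) (hjn : j ≤ n) :
    IsLeast {c | Walk (Edge n Q w Tree) (-1, -1) ((i : ℤ), (j : ℤ)) c} (Tree i j) :=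
  ⟨hT.walk_tree i j hij hjn, fun _ => hT.le_of_walk⟩

end IsTreeTable

theorem stmt8_general (n : ℕ) (Q : ℕ → ℝ)
    (w : ℕ → ℕ → ℝ)
    (Tree : ℕ → ℕ → ℝ)
    (hTree0 : ∀ i, i ≤ n → Tree i i = Q i)
    (hTree : ∀ i j (hij : i < j), j ≤ n →
      Tree i j = (Finset.Ico i j).inf' (Finset.nonempty_Ico.mpr hij)
        (fun k => Tree i k + Tree (k + 1) j + w i j)) :
    ∀ i k j : ℕ, i < k → k < j → k + 1 < j → j ≤ n →
      IsLeast { c : ℝ | ∃ c' : ℝ,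
          Walk (Edge n Q w Tree) (-1, -1) ((i : ℤ), (k : ℤ)) c' ∧
          c = c' + (Tree (k + 1) j + w i j) }
        (Tree i k + Tree (k + 1) j + w i j) ∧
      IsLeast { c : ℝ | ∃ c' : ℝ,
          Walk (Edge n Q w Tree) (-1, -1) (((k + 1 : ℕ) : ℤ), (j : ℤ)) c' ∧
          c = c' + (Tree i k + w i j) }
        (Tree i k + Tree (k + 1) j + w i j) ∧
      ∀ c : ℝ,
        IsLeast { c : ℝ |
            Walk (Edge n Q w Tree) (-1, -1) ((i : ℤ), (j : ℤ)) c } c →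
        ((∃ c' : ℝ,
            Walk (Edge n Q w Tree) (-1, -1) ((i : ℤ), (k : ℤ)) c' ∧
            c = c' + (Tree (k + 1) j + w i j)) ↔
         (∃ c' : ℝ,
            Walk (Edge n Q w Tree) (-1, -1) (((k + 1 : ℕ) : ℤ), (j : ℤ)) c' ∧
            c = c' + (Tree i k + w i j))) := by
  intro i k j hik hkj _ hjn
  have hT : IsTreeTable n Q w Tree := ⟨hTree0, hTree⟩
  have horiz := isLeast_exists_add (hT.isLeast_walk (j := k) hik.le (by omega))
    (e := Tree (k + 1) j + w i j) (v := Tree i k + Tree (k + 1) j + w i j) (by ring)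
  have vert := isLeast_exists_add (hT.isLeast_walk (i := k + 1) (by omega) hjn)
    (e := Tree i k + w i j) (v := Tree i k + Tree (k + 1) j + w i j) (by ring)
  obtain ⟨c', hwalk, hc'⟩ := horiz.1
  have hwalk_ij : Walk (Edge n Q w Tree) (-1, -1) ((i : ℤ), (j : ℤ))
      (Tree i k + Tree (k + 1) j + w i j) :=
    hc' ▸ hwalk.concat (Edge.hjump i k j hik hkj hjn)
  exact ⟨horiz, vert, fun c hc => hc.mem_iff_mem horiz vert hwalk_ij⟩

/-- Duality of shortest paths in the dynamic graph: for all `0 ≤ i < k < j ≤ n`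
with `k+1 < j`, the minimum total weight over directed paths in `D_n` from
`(−1,−1)` to `(i,j)` whose final edge is the horizontal jump `(i,k)→(i,j)`
equals the minimum total weight over directed paths whose final edge is the
vertical jump `(k+1,j)→(i,j)`, and both minima equal
`Tree[i,k] + Tree[k+1,j] + w(i,j)`.  Consequently, a weight `c` of a shortest
path from `(−1,−1)` to `(i,j)` is achieved by a path whose final edge is the
horizontal jump `(i,k)→(i,j)` iff it is achieved by a path (of the same minimal
weight) whose final edge is the vertical jump `(k+1,j)→(i,j)`. -/
theorem stmt8 (n : ℕ) (hn : 1 ≤ n) (P Q : ℕ → ℝ)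
    (hP : ∀ t, 1 ≤ t → t ≤ n → 0 ≤ P t) (hQ : ∀ t, t ≤ n → 0 ≤ Q t)
    (w : ℕ → ℕ → ℝ)
    (hw : ∀ i j, i ≤ j → j ≤ n →
      w i j = (∑ t ∈ Finset.Icc (i + 1) j, P t) + ∑ t ∈ Finset.Icc i j, Q t)
    (Tree : ℕ → ℕ → ℝ)
    (hTree0 : ∀ i, i ≤ n → Tree i i = Q i)
    (hTree : ∀ i j (hij : i < j), j ≤ n →
      Tree i j = (Finset.Ico i j).inf' (Finset.nonempty_Ico.mpr hij)
        (fun k => Tree i k + Tree (k + 1) j + w i j)) :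
    ∀ i k j : ℕ, i < k → k < j → k + 1 < j → j ≤ n →
      IsLeast { c : ℝ | ∃ c' : ℝ,
          Walk (Edge n Q w Tree) (-1, -1) ((i : ℤ), (k : ℤ)) c' ∧
          c = c' + (Tree (k + 1) j + w i j) }
        (Tree i k + Tree (k + 1) j + w i j) ∧
      IsLeast { c : ℝ | ∃ c' : ℝ,
          Walk (Edge n Q w Tree) (-1, -1) (((k + 1 : ℕ) : ℤ), (j : ℤ)) c' ∧
          c = c' + (Tree i k + w i j) }
        (Tree i k + Tree (k + 1) j + w i j) ∧
      ∀ c : ℝ,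
        IsLeast { c : ℝ |
            Walk (Edge n Q w Tree) (-1, -1) ((i : ℤ), (j : ℤ)) c } c →
        ((∃ c' : ℝ,
            Walk (Edge n Q w Tree) (-1, -1) ((i : ℤ), (k : ℤ)) c' ∧
            c = c' + (Tree (k + 1) j + w i j)) ↔
         (∃ c' : ℝ,
            Walk (Edge n Q w Tree) (-1, -1) (((k + 1 : ℕ) : ℤ), (j : ℤ)) c' ∧
            c = c' + (Tree i k + w i j))) :=
  stmt8_general n Q w Tree hTree0 hTree
end

section
/- The per-diagonal computation cost of the CGM-based parallel algorithm based on the four-splitting technique is O(n²/√p): there exists a constant C > 0 such that for all integers n ≥ 0, p ≥ 1 and k ≥ 1, D(n,p,k) = 3·n²/(4p) + 4(⌊S/2⌋ − 1)·n²/(4p) + Σ_{l=2}^{k} 4(⌈S/2⌉ + 1)·n²/(4^l·p) + (⌈S/2⌉ + 1)·n²/(4^k·p) + (S + β)·n²/(4^k·p) ≤ C·n²/√p, where S = ⌈√(2p)⌉ and β = S mod 2. -/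
/-- `S = S(p) = ⌈√(2p)⌉`. -/
noncomputable def Sval (p : ℕ) : ℕ := ⌈Real.sqrt (2 * p)⌉₊

/-- `β = β(p) = S(p) mod 2`. -/
noncomputable def betaVal (p : ℕ) : ℕ := Sval p % 2

/-- The per-diagonal computation cost
`D(n,p,k) = 3·n²/(4p) + 4(⌊S/2⌋ − 1)·n²/(4p)
  + Σ_{l=2}^{k} 4(⌈S/2⌉ + 1)·n²/(4^l·p) + (⌈S/2⌉ + 1)·n²/(4^k·p)
  + (S + β)·n²/(4^k·p)`,
where `S = ⌈√(2p)⌉` and `β = S mod 2` (note `⌊S/2⌋ = S / 2` and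
`⌈S/2⌉ = (S + 1) / 2` with natural division). -/
noncomputable def Dval (n p k : ℕ) : ℝ :=
  3 * (n : ℝ) ^ 2 / (4 * p)
  + 4 * ((Sval p / 2 : ℕ) - 1 : ℝ) * (n : ℝ) ^ 2 / (4 * p)
  + (∑ l ∈ Finset.Icc 2 k,
      4 * (((Sval p + 1) / 2 : ℕ) + 1 : ℝ) * (n : ℝ) ^ 2 / (4 ^ l * p))
  + (((Sval p + 1) / 2 : ℕ) + 1 : ℝ) * (n : ℝ) ^ 2 / (4 ^ k * p)
  + ((Sval p : ℝ) + (betaVal p : ℝ)) * (n : ℝ) ^ 2 / (4 ^ k * p)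

/-! Factoring out `n²/p`, the cost `D(n,p,k)` is `n²/p` times a weight in `S` and `k` only.
Every term of that weight is `O(S)`: the fragmentation levels contribute a geometric series
`Σ_{l ≥ 2} 4⁻ˡ = 1/12`, and `k ≥ 1` bounds the last-level factor `4⁻ᵏ` by `1/4`. Since `S ≥ 2`,
the constants are absorbed and the weight is at most `2S`. Finally `S = ⌈√(2p)⌉ ≤ 3√p`, so
`D(n,p,k) ≤ 6√p · n²/p = 6n²/√p`. -/

open Finset

noncomputable def diagonalWeight (S k : ℕ) : ℝ :=
  3 / 4 + ((S / 2 : ℕ) - 1 : ℝ)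
  + (∑ l ∈ Icc 2 k, 4 * (((S + 1) / 2 : ℕ) + 1 : ℝ) / 4 ^ l)
  + ((((S + 1) / 2 : ℕ) + 1 : ℝ) + S + (S % 2 : ℕ)) / 4 ^ k

lemma Dval_eq_diagonalWeight_mul (n p k : ℕ) :
    Dval n p k = diagonalWeight (Sval p) k * (n ^ 2 / p) := by
  have hsum : ∑ l ∈ Icc 2 k, 4 * (((Sval p + 1) / 2 : ℕ) + 1 : ℝ) * (n : ℝ) ^ 2 / (4 ^ l * p)
      = (∑ l ∈ Icc 2 k, 4 * (((Sval p + 1) / 2 : ℕ) + 1 : ℝ) / 4 ^ l) * (n ^ 2 / p) := by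
    rw [sum_mul]
    exact sum_congr rfl fun l _ => by ring
  rw [Dval, diagonalWeight, betaVal, hsum]
  ring

lemma sum_Icc_two_inv_four_pow_le (k : ℕ) : ∑ l ∈ Icc 2 k, (1 / 4 : ℝ) ^ l ≤ 1 / 12 := by
  calc ∑ l ∈ Icc 2 k, (1 / 4 : ℝ) ^ l = ∑ l ∈ Ico 2 (k + 1), (1 / 4 : ℝ) ^ l := rfl
    _ ≤ (1 / 4) ^ 2 / (1 - 1 / 4) := geom_sum_Ico_le_of_lt_one (by norm_num) (by norm_num)
    _ = 1 / 12 := by norm_num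

lemma diagonalWeight_le {S k : ℕ} (hS : 2 ≤ S) (hk : 1 ≤ k) : diagonalWeight S k ≤ 2 * S := by
  have hA : (((S + 1) / 2 : ℕ) + 1 : ℝ) ≤ S := by exact_mod_cast (by omega : (S + 1) / 2 + 1 ≤ S)
  set A : ℝ := (((S + 1) / 2 : ℕ) + 1 : ℝ)
  have hhalf : ((S / 2 : ℕ) : ℝ) ≤ S / 2 := Nat.cast_div_le
  have hmod : ((S % 2 : ℕ) : ℝ) ≤ 1 := by exact_mod_cast (by omega : S % 2 ≤ 1)
  have hsum : ∑ l ∈ Icc 2 k, 4 * A / 4 ^ l ≤ 4 * S / 12 := by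
    calc ∑ l ∈ Icc 2 k, 4 * A / 4 ^ l = 4 * A * ∑ l ∈ Icc 2 k, (1 / 4 : ℝ) ^ l := by
          rw [mul_sum]
          exact sum_congr rfl fun l _ => by rw [one_div_pow, mul_one_div]
      _ ≤ 4 * S * (1 / 12) := by gcongr; exact sum_Icc_two_inv_four_pow_le k
      _ = 4 * S / 12 := by ring
  have htail : (A + S + (S % 2 : ℕ)) / 4 ^ k ≤ (2 * S + 1) / 4 := by
    calc (A + S + (S % 2 : ℕ)) / 4 ^ k ≤ (2 * S + 1) / 4 ^ k := by gcongr; linarith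
      _ ≤ (2 * S + 1) / 4 := by gcongr; exact le_self_pow₀ (by norm_num) (by omega)
  have hS2 : (2 : ℝ) ≤ S := by exact_mod_cast hS
  rw [diagonalWeight]
  linarith

lemma two_le_Sval {p : ℕ} (hp : 1 ≤ p) : 2 ≤ Sval p := by
  have h2 : (1 : ℝ) < Real.sqrt (2 * p) := by
    rw [Real.lt_sqrt zero_le_one]
    have : (1 : ℝ) ≤ p := by exact_mod_cast hp
    linarith
  have : 1 < Sval p := Nat.lt_ceil.mpr (by exact_mod_cast h2)
  omega

lemma Sval_le_three_mul_sqrt {p : ℕ} (hp : 1 ≤ p) : (Sval p : ℝ) ≤ 3 * Real.sqrt p := by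
  have hceil : (Sval p : ℝ) < Real.sqrt (2 * p) + 1 := Nat.ceil_lt_add_one (Real.sqrt_nonneg _)
  have hsqrt2 : Real.sqrt (2 * p) ≤ 2 * Real.sqrt p := by
    rw [Real.sqrt_mul zero_le_two]
    gcongr
    exact Real.sqrt_le_iff.mpr ⟨zero_le_two, by norm_num⟩
  have hone : 1 ≤ Real.sqrt p := Real.one_le_sqrt.mpr (by exact_mod_cast hp)
  linarith

/-- The per-diagonal computation cost of the CGM-based parallel algorithm based
on the four-splitting technique is `O(n²/√p)`: there is a constant `C > 0` such
that for all integers `n ≥ 0`, `p ≥ 1` and `k ≥ 1`, `D(n,p,k) ≤ C·n²/√p`. -/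
theorem stmt11 :
    ∃ C : ℝ, 0 < C ∧ ∀ n p k : ℕ, 1 ≤ p → 1 ≤ k →
      Dval n p k ≤ C * (n : ℝ) ^ 2 / Real.sqrt p := by
  refine ⟨6, by norm_num, fun n p k hp hk => ?_⟩
  have hS : (2 * Sval p : ℝ) ≤ 6 * Real.sqrt p := by linarith [Sval_le_three_mul_sqrt hp]
  calc Dval n p k = diagonalWeight (Sval p) k * (n ^ 2 / p) := Dval_eq_diagonalWeight_mul n p k
    _ ≤ 6 * Real.sqrt p * (n ^ 2 / p) := by
        gcongr
        exact (diagonalWeight_le (two_le_Sval hp) hk).trans hS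
    _ = 6 * (n : ℝ) ^ 2 * (Real.sqrt p / p) := by ring
    _ = 6 * (n : ℝ) ^ 2 / Real.sqrt p := by rw [Real.sqrt_div_self', mul_one_div]
end
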